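/- arXiv:1202.6287 — 4 statements merged into one kernel-verified Lean document; each statement's English description precedes it below -/
import Mathlib

section
/- The 6-dimensional polytope P ⊂ ℝ⁶ with coordinates (a, b₁, …, b₅) defined by b_i ≥ 0 for 1 ≤ i ≤ 5, a - b_i - b_j ≥ 0 for all 1 ≤ i < j ≤ 5, 2a - (b₁ + ⋯ + b₅) ≥ 0, and 3a - (b₁ + ⋯ + b₅) ≤ 1, has Euclidean volume 1/1080. Consequently α(S) = 6 · vol(P) = 1/180 for a split quartic del Pezzo surface S. -/
/-!
The polytope is invariant under permutations of `b`, so its volume is `5!` times the volume of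
its part where `b₁ ≤ ⋯ ≤ b₅`. There the conditions `a ≥ bᵢ + bⱼ` reduce to `a ≥ b₄ + b₅`, and the
hyperplanes `b₃ = b₁ + b₂`, `b₃ + b₅ = b₁ + b₂ + b₄` and `b₄ + b₅ = b₁ + b₂ + b₃` cut this region
into four simplices. Each of them is the preimage of the corner simplex `{t ≥ 0, ∑ tᵢ ≤ 1}`, of
volume `1/6!`, under a linear map of determinant `±576`, `±576`, `±864`, `±1080`, so the volume
of the polytope is `5!/6! · (1/576 + 1/576 + 1/864 + 1/1080) = 1/1080`.
-/

open MeasureTheory Matrix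
open scoped Nat

def cornerSimplex (n : ℕ) (c : ℝ) : Set (Fin n → ℝ) := {x | (∀ i, 0 ≤ x i) ∧ ∑ i, x i ≤ c}

lemma cornerSimplex_eq_empty {n : ℕ} {c : ℝ} (hc : c < 0) : cornerSimplex n c = ∅ :=
  Set.eq_empty_of_forall_notMem fun _ ⟨hx, hsum⟩ =>
    hc.not_ge ((Finset.sum_nonneg fun i _ => hx i).trans hsum)

lemma piFinSuccAbove_zero_preimage_cornerSimplex (n : ℕ) (c : ℝ) :
    MeasurableEquiv.piFinSuccAbove (fun _ => ℝ) 0 ⁻¹'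
        {p : ℝ × (Fin n → ℝ) | 0 ≤ p.1 ∧ p.2 ∈ cornerSimplex n (c - p.1)} =
      cornerSimplex (n + 1) c := by
  ext x
  simp only [Set.mem_preimage, Set.mem_ofPred_eq, cornerSimplex, Fin.forall_fin_succ,
    Fin.sum_univ_succ, le_sub_iff_add_le', and_assoc]
  rfl

lemma integral_sub_pow_div_factorial (n : ℕ) (c : ℝ) :
    ∫ t in (0 : ℝ)..c, (c - t) ^ n / n ! = c ^ (n + 1) / (n + 1)! := by
  rw [intervalIntegral.integral_div, intervalIntegral.integral_comp_sub_left (· ^ n) c, sub_self,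
    sub_zero, integral_pow, zero_pow n.succ_ne_zero, sub_zero, Nat.factorial_succ, Nat.cast_mul,
    div_div, Nat.cast_succ]

theorem volume_cornerSimplex (n : ℕ) {c : ℝ} (hc : 0 ≤ c) :
    volume (cornerSimplex n c) = ENNReal.ofReal (c ^ n / n !) := by
  induction n generalizing c with
  | zero =>
    have : cornerSimplex 0 c = Set.univ :=
      Set.eq_univ_of_forall fun x => ⟨fun i => i.elim0, by simpa⟩
    simp [this, volume_pi]
  | succ n ih =>
    set T := {p : ℝ × (Fin n → ℝ) | 0 ≤ p.1 ∧ p.2 ∈ cornerSimplex n (c - p.1)}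
    have hT : MeasurableSet T := by
      simp only [T, cornerSimplex, Set.ofPred_and, Set.ofPred_forall]
      measurability
    have hslice (t : ℝ) : volume (Prod.mk t ⁻¹' T) =
        (Set.Icc 0 c).indicator (fun t => ENNReal.ofReal ((c - t) ^ n / n !)) t := by
      rcases lt_or_ge t 0 with ht | ht
      · rw [Set.indicator_of_notMem fun h => ht.not_ge h.1]
        simp [T, ht.not_ge]
      rcases lt_or_ge c t with hct | hct
      · rw [Set.indicator_of_notMem fun h => hct.not_ge h.2]
        simp [T, ht, cornerSimplex_eq_empty (sub_neg.2 hct)]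
      · rw [Set.indicator_of_mem (Set.mem_Icc.2 ⟨ht, hct⟩)]
        simpa [T, ht] using ih (sub_nonneg.2 hct)
    have hnonneg : ∀ t ∈ Set.Icc 0 c, 0 ≤ (c - t) ^ n / n ! := fun t ht =>
      div_nonneg (pow_nonneg (sub_nonneg.2 ht.2) n) n !.cast_nonneg
    rw [← piFinSuccAbove_zero_preimage_cornerSimplex,
      (volume_preserving_piFinSuccAbove (fun _ => ℝ) 0).measure_preimage hT.nullMeasurableSet,
      Measure.volume_eq_prod, Measure.prod_apply hT, lintegral_congr hslice,
      lintegral_indicator measurableSet_Icc, ← ofReal_integral_eq_lintegral_ofReal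
        (by fun_prop : Continuous _).integrableOn_Icc
        ((ae_restrict_iff' measurableSet_Icc).2 (.of_forall hnonneg)),
      integral_Icc_eq_integral_Ioc, ← intervalIntegral.integral_of_le hc,
      integral_sub_pow_div_factorial]

theorem volume_preimage_cornerSimplex {n : ℕ} {A : Matrix (Fin n) (Fin n) ℝ} (hA : A.det ≠ 0) :
    volume (toLin' A ⁻¹' cornerSimplex n 1) = ENNReal.ofReal (|A.det|⁻¹ / n !) := by
  rw [Measure.addHaar_preimage_linearMap _ (by rwa [LinearMap.det_toLin']), LinearMap.det_toLin',
    volume_cornerSimplex n zero_le_one, ← ENNReal.ofReal_mul (abs_nonneg _), abs_inv, one_pow,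
    mul_one_div]

lemma measure_eq_inter_nonneg_add_inter_nonpos {α : Type*} [MeasurableSpace α] {μ : Measure α}
    {f : α → ℝ} (hf : Measurable f) (h0 : μ {x | f x = 0} = 0) (s : Set α) :
    μ s = μ (s ∩ {x | 0 ≤ f x}) + μ (s ∩ {x | f x ≤ 0}) := by
  have hlt : μ (s \ {x | 0 ≤ f x}) = μ (s ∩ {x | f x ≤ 0}) := by
    refine le_antisymm (measure_mono fun x hx => ⟨hx.1, show f x ≤ 0 from (not_le.1 hx.2).le⟩) ?_
    calc μ (s ∩ {x | f x ≤ 0}) ≤ μ (s \ {x | 0 ≤ f x} ∪ {x | f x = 0}) :=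
          measure_mono fun x ⟨hs, hx⟩ => hx.lt_or_eq.imp (fun h => ⟨hs, h.not_ge⟩) id
      _ ≤ μ (s \ {x | 0 ≤ f x}) + μ {x | f x = 0} := measure_union_le _ _
      _ = μ (s \ {x | 0 ≤ f x}) := by rw [h0, add_zero]
  rw [← hlt, measure_inter_add_sdiff s (measurableSet_le measurable_const hf)]

section PiReal

variable {ι : Type*} [Fintype ι]

lemma volume_setOf_dotProduct_eq_zero {v : ι → ℝ} (hv : v ≠ 0) :
    volume {x : ι → ℝ | v ⬝ᵥ x = 0} = 0 :=
  Measure.addHaar_submodule _ (LinearMap.ker (dotProductBilin ℝ ℝ v)) fun h =>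
    hv <| funext fun i => by
      classical
      simpa using LinearMap.congr_fun (LinearMap.ker_eq_top.1 h) (Pi.single i 1)

theorem volume_eq_inter_halfspace_add_inter_halfspace {v : ι → ℝ} (hv : v ≠ 0) (s : Set (ι → ℝ)) :
    volume s = volume (s ∩ {x | 0 ≤ v ⬝ᵥ x}) + volume (s ∩ {x | v ⬝ᵥ x ≤ 0}) :=
  measure_eq_inter_nonneg_add_inter_nonpos (by fun_prop) (volume_setOf_dotProduct_eq_zero hv) s

lemma volume_setOf_apply_eq_apply {i j : ι} (hij : i ≠ j) :
    volume {b : ι → ℝ | b i = b j} = 0 := by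
  classical
  convert volume_setOf_dotProduct_eq_zero (v := Pi.single i 1 - Pi.single j 1) fun h => by
    simpa [hij] using congr_fun h i using 3
  simp [sub_dotProduct, single_dotProduct, sub_eq_zero]

lemma measurePreserving_comp_perm (σ : Equiv.Perm ι) :
    MeasurePreserving (fun b : ι → ℝ => b ∘ σ) := by
  convert volume_preserving_arrowCongr' σ.symm (MeasurableEquiv.refl ℝ) (.id volume) using 1
  ext b i
  rfl

end PiReal

lemma Tuple.eq_sort_of_injective {n : ℕ} {α : Type*} [LinearOrder α] {f : Fin n → α}
    (hf : Function.Injective f) {σ : Equiv.Perm (Fin n)} (hσ : Monotone (f ∘ σ)) :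
    σ = Tuple.sort f :=
  Tuple.eq_sort_iff.2 ⟨hσ, fun _ _ hij he => absurd (σ.injective (hf he)) hij.ne⟩

section Symmetrization

variable {α : Type*} [MeasureSpace α] {n : ℕ}

lemma measurableSet_setOf_monotone_snd : MeasurableSet {p : α × (Fin n → ℝ) | Monotone p.2} :=
  isClosed_monotone.measurableSet.preimage measurable_snd

lemma measurableSet_setOf_monotone_comp (σ : Equiv.Perm (Fin n)) :
    MeasurableSet {p : α × (Fin n → ℝ) | Monotone (p.2 ∘ σ)} :=
  isClosed_monotone.measurableSet.preimage (by fun_prop)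

lemma aedisjoint_setOf_monotone_comp {σ τ : Equiv.Perm (Fin n)} (hστ : σ ≠ τ) :
    AEDisjoint volume {p : α × (Fin n → ℝ) | Monotone (p.2 ∘ σ)}
      {p : α × (Fin n → ℝ) | Monotone (p.2 ∘ τ)} := by
  refine measure_mono_null (t := ⋃ (i) (j) (_ : i ≠ j), {p : α × (Fin n → ℝ) | p.2 i = p.2 j})
    (fun p ⟨hσ, hτ⟩ => ?_) ?_
  · by_contra hp
    simp only [Set.mem_iUnion, not_exists] at hp
    have hinj : Function.Injective p.2 := fun i j h => by_contra fun hij => hp i j hij h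
    exact hστ ((Tuple.eq_sort_of_injective hinj hσ).trans (Tuple.eq_sort_of_injective hinj hτ).symm)
  · refine measure_iUnion_null fun i => measure_iUnion_null fun j =>
      measure_iUnion_null fun hij => ?_
    rw [show {p : α × (Fin n → ℝ) | p.2 i = p.2 j} = Set.univ ×ˢ {b | b i = b j} by ext; simp,
      Measure.volume_eq_prod, Measure.prod_prod, volume_setOf_apply_eq_apply hij, mul_zero]

variable [SFinite (volume : Measure α)] {s : Set (α × (Fin n → ℝ))}

lemma volume_inter_setOf_monotone_comp (hs : MeasurableSet s)
    (hperm : ∀ σ : Equiv.Perm (Fin n), ∀ p ∈ s, (p.1, p.2 ∘ σ) ∈ s) (σ : Equiv.Perm (Fin n)) :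
    volume (s ∩ {p | Monotone (p.2 ∘ σ)}) = volume (s ∩ {p | Monotone p.2}) := by
  have hmp : MeasurePreserving (fun p : α × (Fin n → ℝ) => (p.1, p.2 ∘ σ)) :=
    (MeasurePreserving.id volume).prod (measurePreserving_comp_perm σ)
  have hpre : (fun p : α × (Fin n → ℝ) => (p.1, p.2 ∘ σ)) ⁻¹' (s ∩ {p | Monotone p.2}) =
      s ∩ {p | Monotone (p.2 ∘ σ)} := by
    ext p
    refine and_congr ⟨fun h => ?_, hperm σ p⟩ Iff.rfl
    simpa [Function.comp_assoc] using hperm σ⁻¹ _ h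
  rw [← hpre, hmp.measure_preimage
    (hs.inter measurableSet_setOf_monotone_snd).nullMeasurableSet]

theorem volume_eq_factorial_mul_volume_inter_monotone (hs : MeasurableSet s)
    (hperm : ∀ σ : Equiv.Perm (Fin n), ∀ p ∈ s, (p.1, p.2 ∘ σ) ∈ s) :
    volume s = n ! * volume (s ∩ {p | Monotone p.2}) := by
  have hcover : s = ⋃ σ : Equiv.Perm (Fin n), s ∩ {p | Monotone (p.2 ∘ σ)} :=
    subset_antisymm
      (fun p hp =>
        Set.mem_iUnion_of_mem (Tuple.sort p.2) (Set.mem_inter hp (Tuple.monotone_sort p.2)))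
      (Set.iUnion_subset fun σ => Set.inter_subset_left)
  conv_lhs => rw [hcover]
  rw [measure_iUnion₀ (fun σ τ hστ => (aedisjoint_setOf_monotone_comp hστ).mono
      Set.inter_subset_right Set.inter_subset_right)
      fun σ => (hs.inter (measurableSet_setOf_monotone_comp σ)).nullMeasurableSet,
    tsum_fintype, Finset.sum_congr rfl fun σ _ => volume_inter_setOf_monotone_comp hs hperm σ,
    Finset.sum_const, Finset.card_univ, Fintype.card_perm, Fintype.card_fin, nsmul_eq_mul]

end Symmetrization

def quarticPolytope : Set (ℝ × (Fin 5 → ℝ)) :=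
  {p | (∀ i, 0 ≤ p.2 i) ∧
    (∀ i j : Fin 5, i ≠ j → 0 ≤ p.1 - p.2 i - p.2 j) ∧
    0 ≤ 2 * p.1 - (∑ j, p.2 j) ∧
    3 * p.1 - (∑ j, p.2 j) ≤ 1}

lemma measurableSet_quarticPolytope : MeasurableSet quarticPolytope := by
  simp only [quarticPolytope, Set.ofPred_and, Set.ofPred_forall]
  measurability

lemma comp_perm_mem_quarticPolytope (σ : Equiv.Perm (Fin 5)) {p : ℝ × (Fin 5 → ℝ)}
    (hp : p ∈ quarticPolytope) : (p.1, p.2 ∘ σ) ∈ quarticPolytope := by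
  obtain ⟨hb, hab, h2, h3⟩ := hp
  have hsum : ∑ j, (p.2 ∘ σ) j = ∑ j, p.2 j := Equiv.sum_comp σ p.2
  exact ⟨fun i => hb (σ i), fun i j hij => hab (σ i) (σ j) (σ.injective.ne hij),
    hsum ▸ h2, hsum ▸ h3⟩

lemma mem_quarticPolytope_iff_of_monotone {a : ℝ} {b : Fin 5 → ℝ} (hb : Monotone b) :
    (a, b) ∈ quarticPolytope ↔
      0 ≤ b 0 ∧ b 3 + b 4 ≤ a ∧ 0 ≤ 2 * a - ∑ j, b j ∧ 3 * a - ∑ j, b j ≤ 1 := by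
  have hpairs : (∀ i j : Fin 5, i ≠ j → 0 ≤ a - b i - b j) ↔ b 3 + b 4 ≤ a := by
    refine ⟨fun h => by linarith [h 3 4 (by decide)], fun h i j hij => ?_⟩
    rcases hij.lt_or_gt with hij | hij
    · linarith [hb (show i ≤ 3 by omega), hb (show j ≤ 4 by omega)]
    · linarith [hb (show i ≤ 4 by omega), hb (show j ≤ 3 by omega)]
  simp only [quarticPolytope, Set.mem_ofPred_eq, hpairs]
  exact and_congr ⟨fun h => h 0, fun h i => h.trans (hb (Fin.zero_le i))⟩ Iff.rfl

def sortedRegion : Set (Fin 6 → ℝ) :=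
  {x | 0 ≤ x 1 ∧ x 1 ≤ x 2 ∧ x 2 ≤ x 3 ∧ x 3 ≤ x 4 ∧ x 4 ≤ x 5 ∧ x 4 + x 5 ≤ x 0 ∧
    x 1 + x 2 + x 3 + x 4 + x 5 ≤ 2 * x 0 ∧ 3 * x 0 - (x 1 + x 2 + x 3 + x 4 + x 5) ≤ 1}

lemma piFinSuccAbove_preimage_quarticPolytope_inter_monotone :
    MeasurableEquiv.piFinSuccAbove (fun _ => ℝ) 0 ⁻¹' (quarticPolytope ∩ {p | Monotone p.2}) =
      sortedRegion := by
  ext x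
  have hmono : Monotone (fun j : Fin 5 => x j.succ) ↔
      x 1 ≤ x 2 ∧ x 2 ≤ x 3 ∧ x 3 ≤ x 4 ∧ x 4 ≤ x 5 := by
    simp [Fin.monotone_iff_le_succ, Fin.forall_fin_succ]
  change (x 0, fun j : Fin 5 => x j.succ) ∈ quarticPolytope ∧
    Monotone (fun j : Fin 5 => x j.succ) ↔ _
  constructor
  · rintro ⟨hP, hm⟩
    obtain ⟨h12, h23, h34, h45⟩ := hmono.1 hm
    obtain ⟨h1, h45', h2, h3⟩ := (mem_quarticPolytope_iff_of_monotone hm).1 hP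
    simp only [Fin.sum_univ_five, Fin.succ_zero_eq_one, Fin.succ_one_eq_two, Fin.reduceSucc,
      sub_nonneg] at h1 h45' h2 h3
    exact ⟨h1, h12, h23, h34, h45, by linarith, by linarith, by linarith⟩
  · rintro ⟨h1, h12, h23, h34, h45, h45', h2, h3⟩
    have hm := hmono.2 ⟨h12, h23, h34, h45⟩
    refine ⟨(mem_quarticPolytope_iff_of_monotone hm).2 ?_, hm⟩
    simp only [Fin.sum_univ_five, Fin.succ_zero_eq_one, Fin.succ_one_eq_two, Fin.reduceSucc]
    exact ⟨h1, h45', by linarith, by linarith⟩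

def wall₁ : Fin 6 → ℝ := ![0, -1, -1, 1, 0, 0]
def wall₂ : Fin 6 → ℝ := ![0, -1, -1, 1, -1, 1]
def wall₃ : Fin 6 → ℝ := ![0, -1, -1, -1, 1, 1]

/- Row `k` of `facetMatrixᵢ` is the `k`-th facet inequality of the `i`-th simplex, scaled so that
the rows sum to `3 x₀ - (x₁ + ⋯ + x₅)`; the simplex is then the preimage of `cornerSimplex 6 1`. -/
def facetMatrix₁ : Matrix (Fin 6) (Fin 6) ℝ :=
  !![3, 0, 0, 0, -3, -3;
     0, 0, 0, -4, 4, 0;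
     0, 0, 0, 0, -2, 2;
     0, -3, -3, 3, 0, 0;
     0, 4, 0, 0, 0, 0;
     0, -2, 2, 0, 0, 0]

def facetMatrix₂ : Matrix (Fin 6) (Fin 6) ℝ :=
  !![3, 0, 0, 0, -3, -3;
     0, 0, 0, -4, 4, 0;
     0, -2, -2, 2, -2, 2;
     0, 0, -4, 4, 0, 0;
     0, -2, 2, 0, 0, 0;
     0, 3, 3, -3, 0, 0]

def facetMatrix₃ : Matrix (Fin 6) (Fin 6) ℝ :=
  !![3, 0, 0, 0, -3, -3;
     0, -2, -2, -2, 2, 2;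
     0, 3, 3, -3, 3, -3;
     0, 0, -4, 4, 0, 0;
     0, -2, 2, 0, 0, 0;
     0, 0, 0, 0, -3, 3]

noncomputable def facetMatrix₄ : Matrix (Fin 6) (Fin 6) ℝ :=
  !![3, -3/2, -3/2, -3/2, -3/2, -3/2;
     0, 5/2, 5/2, 5/2, -5/2, -5/2;
     0, 0, 0, -6, 6, 0;
     0, 0, -4, 4, 0, 0;
     0, -2, 2, 0, 0, 0;
     0, 0, 0, 0, -3, 3]

lemma det_facetMatrix₁ : facetMatrix₁.det = 576 := by
  simp [facetMatrix₁, det_succ_row_zero, Fin.sum_univ_succ, Fin.succAbove]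
  norm_num

lemma det_facetMatrix₂ : facetMatrix₂.det = -576 := by
  simp [facetMatrix₂, det_succ_row_zero, Fin.sum_univ_succ, Fin.succAbove]
  norm_num

lemma det_facetMatrix₃ : facetMatrix₃.det = 864 := by
  simp [facetMatrix₃, det_succ_row_zero, Fin.sum_univ_succ, Fin.succAbove]
  norm_num

lemma det_facetMatrix₄ : facetMatrix₄.det = -1080 := by
  simp [facetMatrix₄, det_succ_row_zero, Fin.sum_univ_succ, Fin.succAbove]
  norm_num

lemma sortedRegion_inter_halfspaces_eq_preimage_cornerSimplex :
    sortedRegion ∩ {x | 0 ≤ wall₁ ⬝ᵥ x} = toLin' facetMatrix₁ ⁻¹' cornerSimplex 6 1 ∧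
    sortedRegion ∩ {x | wall₁ ⬝ᵥ x ≤ 0} ∩ {x | 0 ≤ wall₂ ⬝ᵥ x} =
      toLin' facetMatrix₂ ⁻¹' cornerSimplex 6 1 ∧
    sortedRegion ∩ {x | wall₁ ⬝ᵥ x ≤ 0} ∩ {x | wall₂ ⬝ᵥ x ≤ 0} ∩ {x | 0 ≤ wall₃ ⬝ᵥ x} =
      toLin' facetMatrix₃ ⁻¹' cornerSimplex 6 1 ∧
    sortedRegion ∩ {x | wall₁ ⬝ᵥ x ≤ 0} ∩ {x | wall₂ ⬝ᵥ x ≤ 0} ∩ {x | wall₃ ⬝ᵥ x ≤ 0} =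
      toLin' facetMatrix₄ ⁻¹' cornerSimplex 6 1 := by
  refine ⟨?_, ?_, ?_, ?_⟩ <;> ext x <;>
    simp only [sortedRegion, cornerSimplex, wall₁, wall₂, wall₃, facetMatrix₁, facetMatrix₂,
      facetMatrix₃, facetMatrix₄, Set.mem_inter_iff, Set.mem_ofPred_eq, Set.mem_preimage,
      toLin'_apply, mulVec, dotProduct, of_apply, Fin.forall_fin_succ, Fin.sum_univ_six,
      cons_val', cons_val_zero, cons_val_one, cons_val, cons_val_fin_one, Fin.succ_zero_eq_one,
      Fin.succ_one_eq_two, Fin.reduceSucc, IsEmpty.forall_iff, and_true] <;>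
    constructor <;> intro h <;> casesm* _ ∧ _ <;> repeat' apply And.intro
  all_goals linarith

lemma volume_sortedRegion : volume sortedRegion = ENNReal.ofReal (1 / 129600) := by
  obtain ⟨h₁, h₂, h₃, h₄⟩ := sortedRegion_inter_halfspaces_eq_preimage_cornerSimplex
  have hw₁ : wall₁ ≠ 0 := fun h => by simpa [wall₁] using congr_fun h 3
  have hw₂ : wall₂ ≠ 0 := fun h => by simpa [wall₂] using congr_fun h 3
  have hw₃ : wall₃ ≠ 0 := fun h => by simpa [wall₃] using congr_fun h 3
  rw [volume_eq_inter_halfspace_add_inter_halfspace hw₁,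
    volume_eq_inter_halfspace_add_inter_halfspace hw₂ (sortedRegion ∩ {x | wall₁ ⬝ᵥ x ≤ 0}),
    volume_eq_inter_halfspace_add_inter_halfspace hw₃
      (sortedRegion ∩ {x | wall₁ ⬝ᵥ x ≤ 0} ∩ {x | wall₂ ⬝ᵥ x ≤ 0}),
    h₁, h₂, h₃, h₄, volume_preimage_cornerSimplex (by norm_num [det_facetMatrix₁]),
    volume_preimage_cornerSimplex (by norm_num [det_facetMatrix₂]),
    volume_preimage_cornerSimplex (by norm_num [det_facetMatrix₃]),
    volume_preimage_cornerSimplex (by norm_num [det_facetMatrix₄]), det_facetMatrix₁,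
    det_facetMatrix₂, det_facetMatrix₃, det_facetMatrix₄,
    ← ENNReal.ofReal_add (by positivity) (by positivity),
    ← ENNReal.ofReal_add (by positivity) (by positivity),
    ← ENNReal.ofReal_add (by positivity) (by positivity)]
  norm_num [Nat.factorial]

theorem volume_quarticPolytope : volume quarticPolytope = ENNReal.ofReal (1 / 1080) := by
  have hsorted := (volume_preserving_piFinSuccAbove (fun _ : Fin 6 => ℝ) 0).measure_preimage
    (measurableSet_quarticPolytope.inter measurableSet_setOf_monotone_snd).nullMeasurableSet
  rw [piFinSuccAbove_preimage_quarticPolytope_inter_monotone, volume_sortedRegion] at hsorted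
  rw [volume_eq_factorial_mul_volume_inter_monotone measurableSet_quarticPolytope
      comp_perm_mem_quarticPolytope, ← hsorted, ← ENNReal.ofReal_natCast,
    ← ENNReal.ofReal_mul (by positivity)]
  norm_num [Nat.factorial]

theorem stmt_3 :
    volume {p : ℝ × (Fin 5 → ℝ) |
        (∀ i, 0 ≤ p.2 i) ∧
        (∀ i j : Fin 5, i ≠ j → 0 ≤ p.1 - p.2 i - p.2 j) ∧
        0 ≤ 2 * p.1 - (∑ j, p.2 j) ∧
        3 * p.1 - (∑ j, p.2 j) ≤ 1} = ENNReal.ofReal (1 / 1080) ∧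
      (6 : ℝ) * (1 / 1080) = 1 / 180 :=
  ⟨volume_quarticPolytope, by norm_num⟩
end

section
/- Let L be the set of 27 vectors E in ℤ⁷ (with bilinear form diag(1,-1,…,-1) and K = (-3,1,…,1)) satisfying ⟨E,E⟩ = -1 and ⟨E,K⟩ = -1. Then for every E ∈ L, there are exactly 10 elements E' ∈ L with ⟨E,E'⟩ = 1, and exactly 16 elements E' ∈ L with ⟨E,E'⟩ = 0. -/
set_option maxHeartbeats 8000000

lemma sqv (x t : ℤ) (ht : t = x*x) (hl : -1 ≤ x) (hr : x ≤ 1) :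
    (x=-1∧t=1)∨(x=0∧t=0)∨(x=1∧t=1) := by
  interval_cases x <;> omega

lemma cs6 (b1 b2 b3 b4 b5 b6 : ℤ) :
    (b1+b2+b3+b4+b5+b6)*(b1+b2+b3+b4+b5+b6) ≤ 6*(b1*b1+b2*b2+b3*b3+b4*b4+b5*b5+b6*b6) := by
  nlinarith [sq_nonneg (b1-b2), sq_nonneg (b1-b3), sq_nonneg (b1-b4), sq_nonneg (b1-b5),
      sq_nonneg (b1-b6), sq_nonneg (b2-b3), sq_nonneg (b2-b4), sq_nonneg (b2-b5),
      sq_nonneg (b2-b6), sq_nonneg (b3-b4), sq_nonneg (b3-b5), sq_nonneg (b3-b6),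
      sq_nonneg (b4-b5), sq_nonneg (b4-b6), sq_nonneg (b5-b6)]

lemma cs5 (b1 b2 b3 b4 b5 : ℤ) :
    (b1+b2+b3+b4+b5)*(b1+b2+b3+b4+b5) ≤ 5*(b1*b1+b2*b2+b3*b3+b4*b4+b5*b5) := by
  nlinarith [sq_nonneg (b1-b2), sq_nonneg (b1-b3), sq_nonneg (b1-b4), sq_nonneg (b1-b5),
      sq_nonneg (b2-b3), sq_nonneg (b2-b4), sq_nonneg (b2-b5),
      sq_nonneg (b3-b4), sq_nonneg (b3-b5), sq_nonneg (b4-b5)]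

lemma bnd (a x R S : ℤ) (hq : x*x + R = a*a + 1) (hs : x + S = 1 - 3*a)
    (hcs : S*S ≤ 5*R) (ha0 : 0 ≤ a) (ha2 : a ≤ 2) : -1 ≤ x ∧ x ≤ 1 := by
  constructor
  · by_contra h
    push_neg at h
    have hx : x ≤ -2 := by omega
    nlinarith [sq_nonneg (a+x), sq_nonneg (a-3), sq_nonneg (x+2), sq_nonneg a]
  · by_contra h
    push_neg at h
    have hx : 2 ≤ x := by omega
    nlinarith [sq_nonneg a, mul_nonneg ha0 (by omega : (0:ℤ) ≤ x),
      mul_nonneg (by omega : (0:ℤ) ≤ x - 2) (by omega : (0:ℤ) ≤ x)]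

lemma key (a b1 b2 b3 b4 b5 b6 : ℤ)
    (h1 : a*a - (b1*b1+b2*b2+b3*b3+b4*b4+b5*b5+b6*b6) = -1)
    (h2 : -3*a - (b1+b2+b3+b4+b5+b6) = -1) :
    
    (a = 0 ∧ b1 = 1 ∧ b2 = 0 ∧ b3 = 0 ∧ b4 = 0 ∧ b5 = 0 ∧ b6 = 0) ∨
        (a = 0 ∧ b1 = 0 ∧ b2 = 1 ∧ b3 = 0 ∧ b4 = 0 ∧ b5 = 0 ∧ b6 = 0) ∨
        (a = 0 ∧ b1 = 0 ∧ b2 = 0 ∧ b3 = 1 ∧ b4 = 0 ∧ b5 = 0 ∧ b6 = 0) ∨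
        (a = 0 ∧ b1 = 0 ∧ b2 = 0 ∧ b3 = 0 ∧ b4 = 1 ∧ b5 = 0 ∧ b6 = 0) ∨
        (a = 0 ∧ b1 = 0 ∧ b2 = 0 ∧ b3 = 0 ∧ b4 = 0 ∧ b5 = 1 ∧ b6 = 0) ∨
        (a = 0 ∧ b1 = 0 ∧ b2 = 0 ∧ b3 = 0 ∧ b4 = 0 ∧ b5 = 0 ∧ b6 = 1) ∨
        (a = 1 ∧ b1 = -1 ∧ b2 = -1 ∧ b3 = 0 ∧ b4 = 0 ∧ b5 = 0 ∧ b6 = 0) ∨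
        (a = 1 ∧ b1 = -1 ∧ b2 = 0 ∧ b3 = -1 ∧ b4 = 0 ∧ b5 = 0 ∧ b6 = 0) ∨
        (a = 1 ∧ b1 = -1 ∧ b2 = 0 ∧ b3 = 0 ∧ b4 = -1 ∧ b5 = 0 ∧ b6 = 0) ∨
        (a = 1 ∧ b1 = -1 ∧ b2 = 0 ∧ b3 = 0 ∧ b4 = 0 ∧ b5 = -1 ∧ b6 = 0) ∨
        (a = 1 ∧ b1 = -1 ∧ b2 = 0 ∧ b3 = 0 ∧ b4 = 0 ∧ b5 = 0 ∧ b6 = -1) ∨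
        (a = 1 ∧ b1 = 0 ∧ b2 = -1 ∧ b3 = -1 ∧ b4 = 0 ∧ b5 = 0 ∧ b6 = 0) ∨
        (a = 1 ∧ b1 = 0 ∧ b2 = -1 ∧ b3 = 0 ∧ b4 = -1 ∧ b5 = 0 ∧ b6 = 0) ∨
        (a = 1 ∧ b1 = 0 ∧ b2 = -1 ∧ b3 = 0 ∧ b4 = 0 ∧ b5 = -1 ∧ b6 = 0) ∨
        (a = 1 ∧ b1 = 0 ∧ b2 = -1 ∧ b3 = 0 ∧ b4 = 0 ∧ b5 = 0 ∧ b6 = -1) ∨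
        (a = 1 ∧ b1 = 0 ∧ b2 = 0 ∧ b3 = -1 ∧ b4 = -1 ∧ b5 = 0 ∧ b6 = 0) ∨
        (a = 1 ∧ b1 = 0 ∧ b2 = 0 ∧ b3 = -1 ∧ b4 = 0 ∧ b5 = -1 ∧ b6 = 0) ∨
        (a = 1 ∧ b1 = 0 ∧ b2 = 0 ∧ b3 = -1 ∧ b4 = 0 ∧ b5 = 0 ∧ b6 = -1) ∨
        (a = 1 ∧ b1 = 0 ∧ b2 = 0 ∧ b3 = 0 ∧ b4 = -1 ∧ b5 = -1 ∧ b6 = 0) ∨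
        (a = 1 ∧ b1 = 0 ∧ b2 = 0 ∧ b3 = 0 ∧ b4 = -1 ∧ b5 = 0 ∧ b6 = -1) ∨
        (a = 1 ∧ b1 = 0 ∧ b2 = 0 ∧ b3 = 0 ∧ b4 = 0 ∧ b5 = -1 ∧ b6 = -1) ∨
        (a = 2 ∧ b1 = 0 ∧ b2 = -1 ∧ b3 = -1 ∧ b4 = -1 ∧ b5 = -1 ∧ b6 = -1) ∨
        (a = 2 ∧ b1 = -1 ∧ b2 = 0 ∧ b3 = -1 ∧ b4 = -1 ∧ b5 = -1 ∧ b6 = -1) ∨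
        (a = 2 ∧ b1 = -1 ∧ b2 = -1 ∧ b3 = 0 ∧ b4 = -1 ∧ b5 = -1 ∧ b6 = -1) ∨
        (a = 2 ∧ b1 = -1 ∧ b2 = -1 ∧ b3 = -1 ∧ b4 = 0 ∧ b5 = -1 ∧ b6 = -1) ∨
        (a = 2 ∧ b1 = -1 ∧ b2 = -1 ∧ b3 = -1 ∧ b4 = -1 ∧ b5 = 0 ∧ b6 = -1) ∨
        (a = 2 ∧ b1 = -1 ∧ b2 = -1 ∧ b3 = -1 ∧ b4 = -1 ∧ b5 = -1 ∧ b6 = 0) := by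
  have hcs := cs6 b1 b2 b3 b4 b5 b6
  have ha0 : 0 ≤ a := by nlinarith
  have ha2 : a ≤ 2 := by
    by_contra h
    push_neg at h
    nlinarith
  have hb1 := bnd a b1 (b2*b2+b3*b3+b4*b4+b5*b5+b6*b6) (b2+b3+b4+b5+b6) (by linarith) (by linarith) (cs5 b2 b3 b4 b5 b6) ha0 ha2
  have hb2 := bnd a b2 (b1*b1+b3*b3+b4*b4+b5*b5+b6*b6) (b1+b3+b4+b5+b6) (by linarith) (by linarith) (cs5 b1 b3 b4 b5 b6) ha0 ha2
  have hb3 := bnd a b3 (b1*b1+b2*b2+b4*b4+b5*b5+b6*b6) (b1+b2+b4+b5+b6) (by linarith) (by linarith) (cs5 b1 b2 b4 b5 b6) ha0 ha2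
  have hb4 := bnd a b4 (b1*b1+b2*b2+b3*b3+b5*b5+b6*b6) (b1+b2+b3+b5+b6) (by linarith) (by linarith) (cs5 b1 b2 b3 b5 b6) ha0 ha2
  have hb5 := bnd a b5 (b1*b1+b2*b2+b3*b3+b4*b4+b6*b6) (b1+b2+b3+b4+b6) (by linarith) (by linarith) (cs5 b1 b2 b3 b4 b6) ha0 ha2
  have hb6 := bnd a b6 (b1*b1+b2*b2+b3*b3+b4*b4+b5*b5) (b1+b2+b3+b4+b5) (by linarith) (by linarith) (cs5 b1 b2 b3 b4 b5) ha0 ha2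
  have s1 := sqv b1 _ rfl hb1.1 hb1.2
  have s2 := sqv b2 _ rfl hb2.1 hb2.2
  have s3 := sqv b3 _ rfl hb3.1 hb3.2
  have s4 := sqv b4 _ rfl hb4.1 hb4.2
  have s5 := sqv b5 _ rfl hb5.1 hb5.2
  have s6 := sqv b6 _ rfl hb6.1 hb6.2
  have sa : (a=0 ∧ a*a=0) ∨ (a=1 ∧ a*a=1) ∨ (a=2 ∧ a*a=4) := by
    interval_cases a <;> norm_num
  generalize hg0 : a*a = ta at h1 sa
  generalize hg1 : b1*b1 = t1 at h1 s1
  generalize hg2 : b2*b2 = t2 at h1 s2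
  generalize hg3 : b3*b3 = t3 at h1 s3
  generalize hg4 : b4*b4 = t4 at h1 s4
  generalize hg5 : b5*b5 = t5 at h1 s5
  generalize hg6 : b6*b6 = t6 at h1 s6
  clear hcs hg0 hg1 hg2 hg3 hg4 hg5 hg6 hb1 hb2 hb3 hb4 hb5 hb6 ha0 ha2
  rcases sa with ⟨rfl,rfl⟩|⟨rfl,rfl⟩|⟨rfl,rfl⟩ <;>
  rcases s1 with ⟨rfl,rfl⟩|⟨rfl,rfl⟩|⟨rfl,rfl⟩ <;>
  rcases s2 with ⟨rfl,rfl⟩|⟨rfl,rfl⟩|⟨rfl,rfl⟩ <;>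
  rcases s3 with ⟨rfl,rfl⟩|⟨rfl,rfl⟩|⟨rfl,rfl⟩ <;>
  rcases s4 with ⟨rfl,rfl⟩|⟨rfl,rfl⟩|⟨rfl,rfl⟩ <;>
  rcases s5 with ⟨rfl,rfl⟩|⟨rfl,rfl⟩|⟨rfl,rfl⟩ <;>
  rcases s6 with ⟨rfl,rfl⟩|⟨rfl,rfl⟩|⟨rfl,rfl⟩ <;>
  first
    | (exfalso; omega)
    | norm_num


def S7 : Finset (Fin 7 → ℤ) :=
  {![0,1,0,0,0,0,0],
  ![0,0,1,0,0,0,0],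
  ![0,0,0,1,0,0,0],
  ![0,0,0,0,1,0,0],
  ![0,0,0,0,0,1,0],
  ![0,0,0,0,0,0,1],
  ![1,-1,-1,0,0,0,0],
  ![1,-1,0,-1,0,0,0],
  ![1,-1,0,0,-1,0,0],
  ![1,-1,0,0,0,-1,0],
  ![1,-1,0,0,0,0,-1],
  ![1,0,-1,-1,0,0,0],
  ![1,0,-1,0,-1,0,0],
  ![1,0,-1,0,0,-1,0],
  ![1,0,-1,0,0,0,-1],
  ![1,0,0,-1,-1,0,0],
  ![1,0,0,-1,0,-1,0],
  ![1,0,0,-1,0,0,-1],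
  ![1,0,0,0,-1,-1,0],
  ![1,0,0,0,-1,0,-1],
  ![1,0,0,0,0,-1,-1],
  ![2,0,-1,-1,-1,-1,-1],
  ![2,-1,0,-1,-1,-1,-1],
  ![2,-1,-1,0,-1,-1,-1],
  ![2,-1,-1,-1,0,-1,-1],
  ![2,-1,-1,-1,-1,0,-1],
  ![2,-1,-1,-1,-1,-1,0]}

/-- The bilinear form `diag(1,-1,…,-1)` on `ℤ⁷`. -/
def formZ7 (x y : Fin 7 → ℤ) : ℤ := x 0 * y 0 - ∑ i : Fin 6, x i.succ * y i.succ

/-- The canonical class `K = (-3,1,…,1)`. -/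
def K7 : Fin 7 → ℤ := fun i => if i = 0 then -3 else 1

/-- The 27 lines on a cubic surface. -/
def lines7 : Set (Fin 7 → ℤ) := {L | formZ7 L L = -1 ∧ formZ7 L K7 = -1}

lemma formZ7_expand (x y : Fin 7 → ℤ) : formZ7 x y =
    x 0 * y 0 - (x 1 * y 1 + x 2 * y 2 + x 3 * y 3 + x 4 * y 4 + x 5 * y 5 + x 6 * y 6) := by
  simp [formZ7, Fin.sum_univ_six,
    show (Fin.succ 2 : Fin 7) = 3 from rfl, show (Fin.succ 3 : Fin 7) = 4 from rfl,
    show (Fin.succ 4 : Fin 7) = 5 from rfl, show (Fin.succ 5 : Fin 7) = 6 from rfl]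

lemma lines7_eq : lines7 = ↑S7 := by
  ext E
  constructor
  · rintro ⟨h1, h2⟩
    rw [formZ7_expand] at h1 h2
    rw [show K7 0 = -3 from rfl, show K7 1 = 1 from rfl, show K7 2 = 1 from rfl,
      show K7 3 = 1 from rfl, show K7 4 = 1 from rfl, show K7 5 = 1 from rfl,
      show K7 6 = 1 from rfl] at h2
    have hd := key (E 0) (E 1) (E 2) (E 3) (E 4) (E 5) (E 6) (by linarith) (by linarith)
    have hE : E = ![E 0, E 1, E 2, E 3, E 4, E 5, E 6] := by
      funext i; fin_cases i <;> rfl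
    show E ∈ S7
    rcases hd with (⟨e0,e1,e2,e3,e4,e5,e6⟩|⟨e0,e1,e2,e3,e4,e5,e6⟩|⟨e0,e1,e2,e3,e4,e5,e6⟩|⟨e0,e1,e2,e3,e4,e5,e6⟩|⟨e0,e1,e2,e3,e4,e5,e6⟩|⟨e0,e1,e2,e3,e4,e5,e6⟩|⟨e0,e1,e2,e3,e4,e5,e6⟩|⟨e0,e1,e2,e3,e4,e5,e6⟩|⟨e0,e1,e2,e3,e4,e5,e6⟩|⟨e0,e1,e2,e3,e4,e5,e6⟩|⟨e0,e1,e2,e3,e4,e5,e6⟩|⟨e0,e1,e2,e3,e4,e5,e6⟩|⟨e0,e1,e2,e3,e4,e5,e6⟩|⟨e0,e1,e2,e3,e4,e5,e6⟩|⟨e0,e1,e2,e3,e4,e5,e6⟩|⟨e0,e1,e2,e3,e4,e5,e6⟩|⟨e0,e1,e2,e3,e4,e5,e6⟩|⟨e0,e1,e2,e3,e4,e5,e6⟩|⟨e0,e1,e2,e3,e4,e5,e6⟩|⟨e0,e1,e2,e3,e4,e5,e6⟩|⟨e0,e1,e2,e3,e4,e5,e6⟩|⟨e0,e1,e2,e3,e4,e5,e6⟩|⟨e0,e1,e2,e3,e4,e5,e6⟩|⟨e0,e1,e2,e3,e4,e5,e6⟩|⟨e0,e1,e2,e3,e4,e5,e6⟩|⟨e0,e1,e2,e3,e4,e5,e6⟩|⟨e0,e1,e2,e3,e4,e5,e6⟩)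 <;>
      (rw [hE, e0, e1, e2, e3, e4, e5, e6]; decide)
  · intro h
    have h' : E ∈ S7 := h
    fin_cases h' <;> exact ⟨by decide, by decide⟩

lemma counts : ∀ E ∈ S7, (S7.filter (fun E' => formZ7 E E' = 1)).card = 10 ∧
    (S7.filter (fun E' => formZ7 E E' = 0)).card = 16 := by decide

theorem stmt_10 :
    ∀ E ∈ lines7,
      {E' ∈ lines7 | formZ7 E E' = 1}.ncard = 10 ∧
      {E' ∈ lines7 | formZ7 E E' = 0}.ncard = 16 := by
  intro E hE
  have hE' : E ∈ S7 := by rw [lines7_eq] at hE; exact hE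
  have h10 := (counts E hE').1
  have h16 := (counts E hE').2
  constructor
  · have hset : {E' ∈ lines7 | formZ7 E E' = 1} =
        ↑(S7.filter (fun E' => formZ7 E E' = 1)) := by
      rw [lines7_eq]; ext x; simp [Finset.mem_filter]
    rw [hset, Set.ncard_coe_finset, h10]
  · have hset : {E' ∈ lines7 | formZ7 E E' = 0} =
        ↑(S7.filter (fun E' => formZ7 E E' = 0)) := by
      rw [lines7_eq]; ext x; simp [Finset.mem_filter]
    rw [hset, Set.ncard_coe_finset, h16]
end

section
/- Let L be the set of vectors E in ℤ⁹ (with bilinear form diag(1,-1,…,-1) and K = (-3,1,…,1)) satisfying ⟨E,E⟩ = -1 and ⟨E,K⟩ = -1. Then for every E ∈ L there is exactly one E' ∈ L with ⟨E,E'⟩ = 3, namely E' = -2K - E. -/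
/-- The bilinear form `diag(1,-1,…,-1)` on `ℤ⁹`. -/
def formZ9 (x y : Fin 9 → ℤ) : ℤ := x 0 * y 0 - ∑ i : Fin 8, x i.succ * y i.succ

/-- The canonical class `K = (-3,1,…,1)`. -/
def K9 : Fin 9 → ℤ := fun i => if i = 0 then -3 else 1

/-- The 240 `(-1)`-classes in the degree-1 del Pezzo lattice. -/
def lines9 : Set (Fin 9 → ℤ) := {L | formZ9 L L = -1 ∧ formZ9 L K9 = -1}

lemma formZ9_comm (x y : Fin 9 → ℤ) : formZ9 x y = formZ9 y x := by
  simp only [formZ9, mul_comm]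

lemma formZ9_add (x y z : Fin 9 → ℤ) :
    formZ9 (x + y) z = formZ9 x z + formZ9 y z := by
  simp only [formZ9, Pi.add_apply, add_mul, Finset.sum_add_distrib]
  ring

lemma formZ9_add_right (x y z : Fin 9 → ℤ) :
    formZ9 x (y + z) = formZ9 x y + formZ9 x z := by
  rw [formZ9_comm, formZ9_add, formZ9_comm y x, formZ9_comm z x]

lemma formZ9_sub (x y z : Fin 9 → ℤ) :
    formZ9 (x - y) z = formZ9 x z - formZ9 y z := by
  simp only [formZ9, Pi.sub_apply, sub_mul, Finset.sum_sub_distrib]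
  ring

lemma formZ9_sub_right (x y z : Fin 9 → ℤ) :
    formZ9 x (y - z) = formZ9 x y - formZ9 x z := by
  rw [formZ9_comm, formZ9_sub, formZ9_comm y x, formZ9_comm z x]

lemma formZ9_smul (c : ℤ) (x y : Fin 9 → ℤ) :
    formZ9 (c • x) y = c * formZ9 x y := by
  simp only [formZ9, Pi.smul_apply, smul_eq_mul, mul_assoc, ← Finset.mul_sum]
  ring

lemma formZ9_smul_right (c : ℤ) (x y : Fin 9 → ℤ) :
    formZ9 x (c • y) = c * formZ9 x y := by
  rw [formZ9_comm, formZ9_smul, formZ9_comm y x]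

lemma formZ9_K9K9 : formZ9 K9 K9 = 1 := by
  simp [formZ9, K9, Fin.succ_ne_zero]

theorem stmt_13 :
    ∀ E ∈ lines9, ((-2 : ℤ) • K9 - E) ∈ lines9 ∧
      ∀ E' ∈ lines9, (formZ9 E E' = 3 ↔ E' = (-2 : ℤ) • K9 - E) := by
  intro E hE
  obtain ⟨hEE, hEK⟩ := hE
  have hKE : formZ9 K9 E = -1 := by rw [formZ9_comm]; exact hEK
  constructor
  · constructor
    · simp only [formZ9_sub, formZ9_sub_right, formZ9_smul, formZ9_smul_right,
        formZ9_K9K9, hKE, hEK, hEE]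
      ring
    · simp only [formZ9_sub, formZ9_smul, formZ9_K9K9, hEK]
      ring
  · intro E' hE'
    obtain ⟨hE'E', hE'K⟩ := hE'
    have hKE' : formZ9 K9 E' = -1 := by rw [formZ9_comm]; exact hE'K
    constructor
    · intro h3
      have hE'E : formZ9 E' E = 3 := by rw [formZ9_comm]; exact h3
      -- let D = E + E' + 2K; show D = 0
      set D : Fin 9 → ℤ := E + E' + (2 : ℤ) • K9 with hD
      have hDK : formZ9 D K9 = 0 := by
        rw [hD, formZ9_add, formZ9_add, formZ9_smul, formZ9_K9K9, hEK, hE'K]; ring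
      have hDD : formZ9 D D = 0 := by
        rw [hD]
        simp only [formZ9_add, formZ9_add_right, formZ9_smul, formZ9_smul_right,
          formZ9_K9K9, hEK, hE'K, hKE, hKE', hEE, hE'E', h3, hE'E]
        ring
      -- coordinates
      have hS1 : ∑ i : Fin 8, D i.succ = -3 * D 0 := by
        have := hDK
        simp [formZ9, K9, Fin.succ_ne_zero] at this
        linarith
      have hS2 : ∑ i : Fin 8, D i.succ * D i.succ = D 0 * D 0 := by
        have := hDD
        simp only [formZ9] at this
        linarith
      have hCS : (∑ i : Fin 8, D i.succ * (1:ℤ)) ^ 2 ≤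
          (∑ i : Fin 8, D i.succ ^ 2) * ∑ i : Fin 8, (1:ℤ) ^ 2 :=
        Finset.sum_mul_sq_le_sq_mul_sq _ _ _
      simp only [mul_one, one_pow, Finset.sum_const, Finset.card_univ, Fintype.card_fin,
        nsmul_eq_mul, sq, Nat.cast_ofNat] at hCS
      rw [hS1, hS2] at hCS
      have hD0 : D 0 = 0 := by nlinarith [mul_self_nonneg (D 0)]
      have hSq0 : ∑ i : Fin 8, D i.succ * D i.succ = 0 := by rw [hS2, hD0]; ring
      have hall : ∀ i : Fin 8, D i.succ = 0 := by
        intro i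
        have hnn : ∀ j ∈ (Finset.univ : Finset (Fin 8)), 0 ≤ D j.succ * D j.succ :=
          fun j _ => mul_self_nonneg _
        have := (Finset.sum_eq_zero_iff_of_nonneg hnn).mp hSq0 i (Finset.mem_univ i)
        nlinarith
      have hDzero : ∀ i : Fin 9, D i = 0 := by
        intro i
        induction i using Fin.cases with
        | zero => exact hD0
        | succ j => exact hall j
      funext i
      have := hDzero i
      simp only [hD, Pi.add_apply, Pi.smul_apply, smul_eq_mul] at this
      simp only [Pi.sub_apply, Pi.smul_apply, smul_eq_mul]
      linarith
    · rintro rfl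
      rw [formZ9_sub_right, formZ9_smul_right, hEK, hEE]
      ring
end

section
/- Let L be the set of 27 vectors E ∈ ℤ⁷ with ⟨E,E⟩ = -1 and ⟨E,K⟩ = -1 (with form diag(1,-1,…,-1), K = (-3,1,…,1)). The number of unordered pairs {E, E'} of distinct elements of L with ⟨E,E'⟩ = 0 is 216, and the number with ⟨E,E'⟩ = 1 is 135. -/
set_option maxHeartbeats 2000000
set_option maxRecDepth 100000

def linesList : List (Fin 7 → ℤ) := [
  ![0, 1, 0, 0, 0, 0, 0],
  ![0, 0, 1, 0, 0, 0, 0],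
  ![0, 0, 0, 1, 0, 0, 0],
  ![0, 0, 0, 0, 1, 0, 0],
  ![0, 0, 0, 0, 0, 1, 0],
  ![0, 0, 0, 0, 0, 0, 1],
  ![1, -1, -1, 0, 0, 0, 0],
  ![1, -1, 0, -1, 0, 0, 0],
  ![1, -1, 0, 0, -1, 0, 0],
  ![1, -1, 0, 0, 0, -1, 0],
  ![1, -1, 0, 0, 0, 0, -1],
  ![1, 0, -1, -1, 0, 0, 0],
  ![1, 0, -1, 0, -1, 0, 0],
  ![1, 0, -1, 0, 0, -1, 0],
  ![1, 0, -1, 0, 0, 0, -1],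
  ![1, 0, 0, -1, -1, 0, 0],
  ![1, 0, 0, -1, 0, -1, 0],
  ![1, 0, 0, -1, 0, 0, -1],
  ![1, 0, 0, 0, -1, -1, 0],
  ![1, 0, 0, 0, -1, 0, -1],
  ![1, 0, 0, 0, 0, -1, -1],
  ![2, 0, -1, -1, -1, -1, -1],
  ![2, -1, 0, -1, -1, -1, -1],
  ![2, -1, -1, 0, -1, -1, -1],
  ![2, -1, -1, -1, 0, -1, -1],
  ![2, -1, -1, -1, -1, 0, -1],
  ![2, -1, -1, -1, -1, -1, 0]]

lemma int_sq_ge (x : ℤ) : x ≤ x * x := by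
  rcases le_or_gt x 0 with h | h
  · nlinarith
  · nlinarith

lemma int_sq_ge_neg (x : ℤ) : -x ≤ x * x := by nlinarith [int_sq_ge (-x)]

lemma sq_eq_self (x : ℤ) (h : x * x = x) : x = 0 ∨ x = 1 := by
  have h2 : x * (x - 1) = 0 := by linear_combination h
  rcases mul_eq_zero.mp h2 with h | h
  · left; exact h
  · right; omega

lemma sq_eq_neg_self (x : ℤ) (h : x * x = -x) : x = 0 ∨ x = -1 := by
  have h2 : x * (x + 1) = 0 := by linear_combination h
  rcases mul_eq_zero.mp h2 with h | h
  · left; exact h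
  · right; omega

lemma mem_linesList (E : Fin 7 → ℤ) (hE : E ∈ lines7) : E ∈ linesList := by
  obtain ⟨h1, h2⟩ := hE
  simp only [formZ7, K7, Fin.sum_univ_six, Fin.succ_ne_zero, if_neg, if_true, if_false,
    reduceIte, mul_one] at h1 h2
  have hEv : E = ![E 0, E (Fin.succ 0), E (Fin.succ 1), E (Fin.succ 2), E (Fin.succ 3),
      E (Fin.succ 4), E (Fin.succ 5)] := by
    ext i; fin_cases i <;> rfl
  set a := E 0 with ha'
  set x0 := E (Fin.succ 0) with hx0'
  set x1 := E (Fin.succ 1) with hx1'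
  set x2 := E (Fin.succ 2) with hx2'
  set x3 := E (Fin.succ 3) with hx3'
  set x4 := E (Fin.succ 4) with hx4'
  set x5 := E (Fin.succ 5) with hx5'
  clear_value a x0 x1 x2 x3 x4 x5
  clear ha' hx0' hx1' hx2' hx3' hx4' hx5'
  -- Cauchy–Schwarz identity
  have key : (x0+x1+x2+x3+x4+x5)*(x0+x1+x2+x3+x4+x5)
      + ((x0-x1)^2 + (x0-x2)^2 + (x0-x3)^2 + (x0-x4)^2 + (x0-x5)^2
        + (x1-x2)^2 + (x1-x3)^2 + (x1-x4)^2 + (x1-x5)^2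
        + (x2-x3)^2 + (x2-x4)^2 + (x2-x5)^2
        + (x3-x4)^2 + (x3-x5)^2 + (x4-x5)^2)
      = 6*(x0*x0+x1*x1+x2*x2+x3*x3+x4*x4+x5*x5) := by ring
  have hnn : (0:ℤ) ≤ (x0-x1)^2 + (x0-x2)^2 + (x0-x3)^2 + (x0-x4)^2 + (x0-x5)^2
        + (x1-x2)^2 + (x1-x3)^2 + (x1-x4)^2 + (x1-x5)^2
        + (x2-x3)^2 + (x2-x4)^2 + (x2-x5)^2
        + (x3-x4)^2 + (x3-x5)^2 + (x4-x5)^2 := by positivity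
  have hs : x0+x1+x2+x3+x4+x5 = 1 - 3*a := by linarith
  have hq : x0*x0+x1*x1+x2*x2+x3*x3+x4*x4+x5*x5 = a*a + 1 := by linarith
  rw [hs, hq] at key
  have hb : (1 - 3*a)*(1-3*a) ≤ 6*(a*a+1) := by linarith
  have ha : a = 0 ∨ a = 1 ∨ a = 2 := by
    have h3 : -3*a ≤ 2 := by nlinarith [sq_nonneg (a+1)]
    have h4 : 6*a ≤ 17 := by nlinarith [sq_nonneg (a-2)]
    omega
  rcases ha with ha | ha | ha
  · rw [ha] at hq h2
    have e0 : x0 * x0 = x0 := by linarith [int_sq_ge x0, int_sq_ge x1, int_sq_ge x2, int_sq_ge x3, int_sq_ge x4, int_sq_ge x5]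
    have e1 : x1 * x1 = x1 := by linarith [int_sq_ge x0, int_sq_ge x1, int_sq_ge x2, int_sq_ge x3, int_sq_ge x4, int_sq_ge x5]
    have e2 : x2 * x2 = x2 := by linarith [int_sq_ge x0, int_sq_ge x1, int_sq_ge x2, int_sq_ge x3, int_sq_ge x4, int_sq_ge x5]
    have e3 : x3 * x3 = x3 := by linarith [int_sq_ge x0, int_sq_ge x1, int_sq_ge x2, int_sq_ge x3, int_sq_ge x4, int_sq_ge x5]
    have e4 : x4 * x4 = x4 := by linarith [int_sq_ge x0, int_sq_ge x1, int_sq_ge x2, int_sq_ge x3, int_sq_ge x4, int_sq_ge x5]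
    have e5 : x5 * x5 = x5 := by linarith [int_sq_ge x0, int_sq_ge x1, int_sq_ge x2, int_sq_ge x3, int_sq_ge x4, int_sq_ge x5]
    clear key hnn hb h1 hq hs
    rw [hEv]
    rcases sq_eq_self _ e0 with d0 | d0 <;> rcases sq_eq_self _ e1 with d1 | d1 <;>
      rcases sq_eq_self _ e2 with d2 | d2 <;> rcases sq_eq_self _ e3 with d3 | d3 <;>
      rcases sq_eq_self _ e4 with d4 | d4 <;> rcases sq_eq_self _ e5 with d5 | d5 <;>
      rw [ha, d0, d1, d2, d3, d4, d5] <;> first | omega | simp [linesList]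
  · rw [ha] at hq h2
    have e0 : x0 * x0 = -x0 := by linarith [int_sq_ge_neg x0, int_sq_ge_neg x1, int_sq_ge_neg x2, int_sq_ge_neg x3, int_sq_ge_neg x4, int_sq_ge_neg x5]
    have e1 : x1 * x1 = -x1 := by linarith [int_sq_ge_neg x0, int_sq_ge_neg x1, int_sq_ge_neg x2, int_sq_ge_neg x3, int_sq_ge_neg x4, int_sq_ge_neg x5]
    have e2 : x2 * x2 = -x2 := by linarith [int_sq_ge_neg x0, int_sq_ge_neg x1, int_sq_ge_neg x2, int_sq_ge_neg x3, int_sq_ge_neg x4, int_sq_ge_neg x5]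
    have e3 : x3 * x3 = -x3 := by linarith [int_sq_ge_neg x0, int_sq_ge_neg x1, int_sq_ge_neg x2, int_sq_ge_neg x3, int_sq_ge_neg x4, int_sq_ge_neg x5]
    have e4 : x4 * x4 = -x4 := by linarith [int_sq_ge_neg x0, int_sq_ge_neg x1, int_sq_ge_neg x2, int_sq_ge_neg x3, int_sq_ge_neg x4, int_sq_ge_neg x5]
    have e5 : x5 * x5 = -x5 := by linarith [int_sq_ge_neg x0, int_sq_ge_neg x1, int_sq_ge_neg x2, int_sq_ge_neg x3, int_sq_ge_neg x4, int_sq_ge_neg x5]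
    clear key hnn hb h1 hq hs
    rw [hEv]
    rcases sq_eq_neg_self _ e0 with d0 | d0 <;> rcases sq_eq_neg_self _ e1 with d1 | d1 <;>
      rcases sq_eq_neg_self _ e2 with d2 | d2 <;> rcases sq_eq_neg_self _ e3 with d3 | d3 <;>
      rcases sq_eq_neg_self _ e4 with d4 | d4 <;> rcases sq_eq_neg_self _ e5 with d5 | d5 <;>
      rw [ha, d0, d1, d2, d3, d4, d5] <;> first | omega | simp [linesList]
  · rw [ha] at hq h2
    have e0 : x0 * x0 = -x0 := by linarith [int_sq_ge_neg x0, int_sq_ge_neg x1, int_sq_ge_neg x2, int_sq_ge_neg x3, int_sq_ge_neg x4, int_sq_ge_neg x5]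
    have e1 : x1 * x1 = -x1 := by linarith [int_sq_ge_neg x0, int_sq_ge_neg x1, int_sq_ge_neg x2, int_sq_ge_neg x3, int_sq_ge_neg x4, int_sq_ge_neg x5]
    have e2 : x2 * x2 = -x2 := by linarith [int_sq_ge_neg x0, int_sq_ge_neg x1, int_sq_ge_neg x2, int_sq_ge_neg x3, int_sq_ge_neg x4, int_sq_ge_neg x5]
    have e3 : x3 * x3 = -x3 := by linarith [int_sq_ge_neg x0, int_sq_ge_neg x1, int_sq_ge_neg x2, int_sq_ge_neg x3, int_sq_ge_neg x4, int_sq_ge_neg x5]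
    have e4 : x4 * x4 = -x4 := by linarith [int_sq_ge_neg x0, int_sq_ge_neg x1, int_sq_ge_neg x2, int_sq_ge_neg x3, int_sq_ge_neg x4, int_sq_ge_neg x5]
    have e5 : x5 * x5 = -x5 := by linarith [int_sq_ge_neg x0, int_sq_ge_neg x1, int_sq_ge_neg x2, int_sq_ge_neg x3, int_sq_ge_neg x4, int_sq_ge_neg x5]
    clear key hnn hb h1 hq hs
    rw [hEv]
    rcases sq_eq_neg_self _ e0 with d0 | d0 <;> rcases sq_eq_neg_self _ e1 with d1 | d1 <;>
      rcases sq_eq_neg_self _ e2 with d2 | d2 <;> rcases sq_eq_neg_self _ e3 with d3 | d3 <;>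
      rcases sq_eq_neg_self _ e4 with d4 | d4 <;> rcases sq_eq_neg_self _ e5 with d5 | d5 <;>
      rw [ha, d0, d1, d2, d3, d4, d5] <;> first | omega | simp [linesList]


lemma linesList_mem_lines7 : ∀ E ∈ linesList, formZ7 E E = -1 ∧ formZ7 E K7 = -1 := by decide

def linesFinset : Finset (Fin 7 → ℤ) := linesList.toFinset

lemma mem_lines7_iff (E : Fin 7 → ℤ) : E ∈ lines7 ↔ E ∈ linesFinset := by
  constructor
  · intro h
    exact List.mem_toFinset.mpr (mem_linesList E h)
  · intro h
    exact linesList_mem_lines7 E (List.mem_toFinset.mp h)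

def pairsF (c : ℤ) : Finset (Finset (Fin 7 → ℤ)) :=
  (linesFinset.powersetCard 2).filter
    (fun t => ∃ E ∈ t, ∃ E' ∈ t, E ≠ E' ∧ formZ7 E E' = c)

lemma formZ7_symm (x y : Fin 7 → ℤ) : formZ7 x y = formZ7 y x := by
  unfold formZ7
  congr 1
  · ring
  · exact Finset.sum_congr rfl (fun i _ => mul_comm _ _)

lemma setEq (c : ℤ) :
    {s : Set (Fin 7 → ℤ) | ∃ E E', E ∈ lines7 ∧ E' ∈ lines7 ∧ E ≠ E' ∧
        formZ7 E E' = c ∧ s = {E, E'}} =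
      (fun t : Finset (Fin 7 → ℤ) => (↑t : Set (Fin 7 → ℤ))) '' ↑(pairsF c) := by
  ext s
  constructor
  · rintro ⟨E, E', hE, hE', hne, hc, rfl⟩
    refine ⟨{E, E'}, ?_, by simp⟩
    simp only [pairsF, Finset.mem_coe, Finset.mem_filter, Finset.mem_powersetCard]
    refine ⟨⟨?_, ?_⟩, E, by simp, E', by simp, hne, hc⟩
    · intro x hx
      simp only [Finset.mem_insert, Finset.mem_singleton] at hx
      rcases hx with rfl | rfl
      · exact (mem_lines7_iff x).mp hE
      · exact (mem_lines7_iff x).mp hE'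
    · rw [Finset.card_insert_of_notMem (by simpa using hne), Finset.card_singleton]
  · rintro ⟨t, ht, rfl⟩
    simp only [pairsF, Finset.mem_coe, Finset.mem_filter, Finset.mem_powersetCard] at ht
    obtain ⟨⟨hsub, hcard⟩, E, hEt, E', hE't, hne, hc⟩ := ht
    have hteq : t = {E, E'} := by
      symm
      apply Finset.eq_of_subset_of_card_le
      · intro x hx
        simp only [Finset.mem_insert, Finset.mem_singleton] at hx
        rcases hx with rfl | rfl
        · exact hEt
        · exact hE't
      · rw [hcard, Finset.card_insert_of_notMem (by simpa using hne), Finset.card_singleton]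
    refine ⟨E, E', (mem_lines7_iff E).mpr (hsub hEt), (mem_lines7_iff E').mpr (hsub hE't),
      hne, hc, ?_⟩
    rw [hteq]
    simp

lemma count_eq (c : ℤ) :
    {s : Set (Fin 7 → ℤ) | ∃ E E', E ∈ lines7 ∧ E' ∈ lines7 ∧ E ≠ E' ∧
        formZ7 E E' = c ∧ s = {E, E'}}.ncard = (pairsF c).card := by
  rw [setEq c, Set.ncard_image_of_injective _ Finset.coe_injective, Set.ncard_coe_finset]

theorem stmt_19 :
    {s : Set (Fin 7 → ℤ) | ∃ E E', E ∈ lines7 ∧ E' ∈ lines7 ∧ E ≠ E' ∧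
        formZ7 E E' = 0 ∧ s = {E, E'}}.ncard = 216 ∧
    {s : Set (Fin 7 → ℤ) | ∃ E E', E ∈ lines7 ∧ E' ∈ lines7 ∧ E ≠ E' ∧
        formZ7 E E' = 1 ∧ s = {E, E'}}.ncard = 135 := by
  constructor
  · rw [count_eq 0]; decide
  · rw [count_eq 1]; decide
end
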